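/- Let X be a set, 𝓕 a clone on X, and r ≥ 3 an integer such that g_{r;1,2} ∈ 𝓕. Then g_{s;1,2} ∈ 𝓕 for every integer s ≥ r. -/

import Mathlib

/-- `F` is a clone on `X`. -/
def IsClone {X : Type*} (F : ∀ n : ℕ, Set ((Fin n → X) → X)) : Prop :=
  (∀ n : ℕ, ∀ i : Fin n, (fun x : Fin n → X => x i) ∈ F n) ∧
  (∀ n m : ℕ, 0 < n → 0 < m → ∀ f ∈ F n, ∀ g : Fin n → (Fin m → X) → X,
    (∀ i, g i ∈ F m) → (fun x : Fin m → X => f fun i => g i x) ∈ F m)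

/-- The function `g_{r;1,2} : Xʳ → X`: it returns the second coordinate if all
coordinates except possibly the first are equal, and the first coordinate
otherwise. -/
noncomputable def gFun {X : Type*} (r : ℕ) [NeZero r] (x : Fin r → X) : X :=
  haveI := Classical.propDecidable (∀ i : Fin r, i ≠ 0 → x i = x 1)
  if ∀ i : Fin r, i ≠ 0 → x i = x 1 then x 1 else x 0

/-!
Identifying the last `r - 2` arguments of `g_r` gives
`g_3 (x₀, a, b) = if b = a then a else x₀`, so `g_3 ∈ 𝓕`. For `s ≥ 2`,
`g_{s+1} (x₀, …, x_s) = g_s (x₀, …, x_{s-2}, g_3 (x₀, x_{s-1}, x_s))`: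
if `x_{s-1} = x_s` the right side merely merges the two equal last arguments, and otherwise
both sides are `x₀`, the right one because its last argument is then `x₀`.
Induction on `s` starting at `r` finishes the proof.
-/

section

variable {X : Type*} {F : ∀ n : ℕ, Set ((Fin n → X) → X)}

theorem IsClone.comp_mem (hF : IsClone F)
    {n m : ℕ} [NeZero n] [NeZero m] {f : (Fin n → X) → X} (hf : f ∈ F n)
    {g : Fin n → (Fin m → X) → X} (hg : ∀ i, g i ∈ F m) :
    (fun x => f fun i => g i x) ∈ F m :=
  hF.2 n m (Nat.pos_of_neZero n) (Nat.pos_of_neZero m) f hf g hg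

theorem IsClone.comp_right_mem (hF : IsClone F) {n m : ℕ} [NeZero n] [NeZero m]
    {f : (Fin n → X) → X} (hf : f ∈ F n)
    (σ : Fin n → Fin m) : (fun x => f (x ∘ σ)) ∈ F m :=
  hF.comp_mem hf fun i => hF.1 m (σ i)

theorem gFun_eq_apply_zero_of_ne {n : ℕ} [NeZero n] {x : Fin n → X} {i j : Fin n}
    (hi : i ≠ 0) (hj : j ≠ 0) (hij : x i ≠ x j) : gFun n x = x 0 := by
  unfold gFun
  rw [if_neg]
  exact fun hall => hij ((hall i hi).trans (hall j hj).symm)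

theorem gFun_eq_apply_zero_of_apply_eq {n : ℕ} [NeZero n] {x : Fin n → X} {i : Fin n}
    (hi : i ≠ 0) (hx : x i = x 0) : gFun n x = x 0 := by
  unfold gFun
  split_ifs with hall
  · rw [← hall i hi, hx]
  · rfl

theorem gFun_comp {n m : ℕ} [NeZero n] [NeZero m] (x : Fin m → X) (σ : Fin n → Fin m)
    (h0 : σ 0 = 0) (h1 : σ 1 = 1) (hσ : ∀ i, i ≠ 0 → σ i ≠ 0)
    (hx : ∀ j, j ≠ 0 → ∃ i, i ≠ 0 ∧ x (σ i) = x j) :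
    gFun n (x ∘ σ) = gFun m x := by
  have hiff : (∀ i, i ≠ 0 → x (σ i) = x (σ 1)) ↔ ∀ j, j ≠ 0 → x j = x 1 := by
    rw [h1]
    refine ⟨fun hall j hj => ?_, fun hall i hi => hall _ (hσ i hi)⟩
    obtain ⟨i, hi, hij⟩ := hx j hj
    rw [← hij, hall i hi]
  unfold gFun
  simp only [Function.comp_apply, h0, h1]
  split_ifs with hn hm hm
  · rfl
  · exact absurd (hiff.1 hn) hm
  · exact absurd (hiff.2 hm) hn
  · rfl

theorem gFun_three [DecidableEq X] (x : Fin 3 → X) :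
    gFun 3 x = if x 2 = x 1 then x 1 else x 0 := by
  split_ifs with h
  · unfold gFun
    rw [if_pos]
    intro i hi
    fin_cases i <;> simp_all
  · exact gFun_eq_apply_zero_of_ne (by decide) (by decide) h

theorem gFun_comp_cons_cons_const (k : ℕ) (x : Fin 3 → X) :
    gFun (k + 3) (x ∘ (Fin.cons 0 (Fin.cons 1 fun _ => 2) : Fin (k + 3) → Fin 3)) =
      gFun 3 x := by
  refine gFun_comp x _ rfl rfl (fun i hi => ?_) (fun j hj => ?_)
  · induction i using Fin.cases with
    | zero => exact absurd rfl hi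
    | succ i => cases i using Fin.cases <;> simp
  · fin_cases j
    · exact absurd rfl hj
    · exact ⟨Fin.succ 0, Fin.succ_ne_zero _, rfl⟩
    · exact ⟨Fin.succ 1, Fin.succ_ne_zero _, rfl⟩

theorem gFun_init {m : ℕ} (x : Fin (m + 3) → X)
    (hx : x (Fin.last (m + 1)).castSucc = x (Fin.last (m + 2))) :
    gFun (m + 2) (Fin.init x) = gFun (m + 3) x := by
  refine gFun_comp x Fin.castSucc rfl Fin.castSucc_one (fun i hi => ?_) (fun j hj => ?_)
  · exact Fin.castSucc_ne_zero_iff.2 hi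
  · induction j using Fin.lastCases with
    | last => exact ⟨Fin.last (m + 1), Fin.last_pos.ne', hx⟩
    | cast j => exact ⟨j, fun h => hj (by rw [h, Fin.castSucc_zero]), rfl⟩

theorem gFun_succ (m : ℕ) (x : Fin (m + 3) → X) :
    gFun (m + 3) x = gFun (m + 2) (Function.update (Fin.init x) (Fin.last (m + 1))
      (gFun 3 (x ∘ ![0, (Fin.last (m + 1)).castSucc, Fin.last (m + 2)]))) := by
  classical
  set y := x ∘ ![0, (Fin.last (m + 1)).castSucc, Fin.last (m + 2)]
  by_cases hx : y 2 = y 1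
  · have hy : gFun 3 y = y 1 := by rw [gFun_three, if_pos hx]
    rw [hy, ← gFun_init x hx.symm]
    exact congrArg _ (Function.update_eq_self _ _).symm
  · have hy : gFun 3 y = y 0 := by rw [gFun_three, if_neg hx]
    rw [hy, gFun_eq_apply_zero_of_ne (x := x) Fin.last_pos.ne'
      (Fin.castSucc_ne_zero_iff.2 Fin.last_pos.ne') hx,
      gFun_eq_apply_zero_of_apply_eq (i := Fin.last (m + 1)) Fin.last_pos.ne']
    · rw [Function.update_of_ne Fin.last_pos.ne]
      rfl
    · rw [Function.update_self, Function.update_of_ne Fin.last_pos.ne]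
      rfl

theorem IsClone.gFun_succ_mem (hF : IsClone F)
    (h3 : gFun 3 ∈ F 3) {m : ℕ} (hm : gFun (m + 2) ∈ F (m + 2)) :
    gFun (m + 3) ∈ F (m + 3) := by
  let σ : Fin 3 → Fin (m + 3) := ![0, (Fin.last (m + 1)).castSucc, Fin.last (m + 2)]
  let G : Fin (m + 2) → (Fin (m + 3) → X) → X := fun i x =>
    Function.update (Fin.init x) (Fin.last (m + 1)) (gFun 3 (x ∘ σ)) i
  have hG : ∀ i, G i ∈ F (m + 3) := by
    intro i
    by_cases hi : i = Fin.last (m + 1)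
    · simpa only [G, hi, Function.update_self] using hF.comp_right_mem h3 σ
    · simp only [G, Function.update_of_ne hi]
      exact hF.1 _ i.castSucc
  convert hF.comp_mem hm hG using 1
  exact funext (gFun_succ m)

end

theorem stmt4 {X : Type*} (F : ∀ n : ℕ, Set ((Fin n → X) → X)) (hF : IsClone F)
    (r : ℕ) (hr : 3 ≤ r)
    (h : @gFun X r ⟨by omega⟩ ∈ F r) :
    ∀ s : ℕ, ∀ _hs : r ≤ s, @gFun X s ⟨by omega⟩ ∈ F s := by
  intro s hs
  obtain ⟨k, rfl⟩ : ∃ k, r = k + 3 := ⟨r - 3, by omega⟩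
  have h3 : gFun 3 ∈ F 3 := by
    simpa only [gFun_comp_cons_cons_const] using
      hF.comp_right_mem h (Fin.cons 0 (Fin.cons 1 fun _ => 2) : Fin (k + 3) → Fin 3)
  induction s, hs using Nat.le_induction with
  | base => exact h
  | succ s hs ih =>
    obtain ⟨m, rfl⟩ : ∃ m, s = m + 2 := ⟨s - 2, by omega⟩
    exact hF.gFun_succ_mem h3 ih
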